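/- Let T : ℝ₊^N → ℝ₊₊^N be a positive concave mapping whose lower bounding matrix M satisfies ρ(M) < 1. Then for every x ∈ ℝ₊^N, the vector (I − M)⁻¹·(T(x) − M·x) is strictly positive in every component; in particular T(x) − M·x ≥ T(0) > 0 componentwise. -/

import Mathlib

open Matrix Filter Topology

noncomputable section

/-- `g` is a supergradient of `f` at `x`: the supergradient inequality holds for all
points `y` in the nonnegative orthant. -/
def IsSupergrad {N : ℕ} (f : (Fin N → ℝ) → ℝ) (x g : Fin N → ℝ) : Prop :=
  ∀ y : Fin N → ℝ, 0 ≤ y → f y ≤ f x + ∑ i, g i * (y i - x i)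

/-- `M` is the lower bounding matrix of the positive concave mapping with components `f i`:
`M i k` is the infimum of the `k`-th components of all supergradients of `f i` at points of
the nonnegative orthant. -/
def IsLBM {N : ℕ} (f : Fin N → (Fin N → ℝ) → ℝ) (M : Matrix (Fin N) (Fin N) ℝ) : Prop :=
  ∀ i k, M i k =
    sInf {t : ℝ | ∃ x : Fin N → ℝ, 0 ≤ x ∧ ∃ g : Fin N → ℝ, IsSupergrad (f i) x g ∧ g k = t}

/-- The spectral radius of a real matrix: the supremum of the moduli of its complex
eigenvalues. -/
def specRad {N : ℕ} (M : Matrix (Fin N) (Fin N) ℝ) : ENNReal :=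
  spectralRadius ℂ (M.map (algebraMap ℝ ℂ))

/-!
At a strictly positive point `x`, separating `(x, fᵢ x)` from the open strict hypograph of `fᵢ`
gives a supergradient `g`. Positivity of `fᵢ` forces `g ≥ 0`, so the infimum defining `M` is
finite and `Mᵢ ≤ g` componentwise; the supergradient inequality at `0` then yields
`fᵢ 0 ≤ fᵢ x - ⟪g, x⟫ ≤ fᵢ x - (M x)ᵢ`, and upper semicontinuity carries this to the boundary of
the orthant. Finally `ρ(M) < 1` makes `Mⁿ → 0` (Gelfand's formula), so `(I - M)⁻¹ = ∑ Mⁿ ≥ I`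
entrywise and `(I - M)⁻¹ v ≥ v > 0` for `v = T x - M x ≥ T 0`.
-/

open Set

section Concave

variable {E : Type*} [NormedAddCommGroup E] [NormedSpace ℝ E] {s : Set E} {f : E → ℝ} {x : E}

theorem ConcaveOn.convex_strictHypograph_interior (hf : ConcaveOn ℝ s f) :
    Convex ℝ {p : E × ℝ | p.1 ∈ interior s ∧ p.2 < f p.1} := by
  rintro ⟨p, r⟩ ⟨hp, hr⟩ ⟨q, t⟩ ⟨hq, ht⟩ a b ha hb hab
  refine ⟨hf.1.interior hp hq ha hb hab, ?_⟩
  calc a * r + b * t < a * f p + b * f q := by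
        rcases ha.eq_or_lt with rfl | ha'
        · simp_all
        · nlinarith [mul_lt_mul_of_pos_left hr ha', mul_le_mul_of_nonneg_left ht.le hb]
    _ ≤ f (a • p + b • q) := hf.2 (interior_subset hp) (interior_subset hq) ha hb hab

theorem ConcaveOn.isOpen_strictHypograph_interior [FiniteDimensional ℝ E] (hf : ConcaveOn ℝ s f) :
    IsOpen {p : E × ℝ | p.1 ∈ interior s ∧ p.2 < f p.1} := by
  have hcont : ContinuousOn (fun p : E × ℝ => f p.1 - p.2) (interior s ×ˢ univ) :=
    (hf.continuousOn_interior.comp continuous_fst.continuousOn fun p hp => hp.1).sub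
      continuous_snd.continuousOn
  convert hcont.isOpen_inter_preimage (isOpen_interior.prod isOpen_univ)
    (isOpen_Ioi (a := (0 : ℝ))) using 1
  ext p
  simp [sub_pos]

theorem ConcaveOn.exists_le_add_on_interior [FiniteDimensional ℝ E] (hf : ConcaveOn ℝ s f)
    (hx : x ∈ interior s) : ∃ φ : E →L[ℝ] ℝ, ∀ y ∈ interior s, f y ≤ f x + φ (y - x) := by
  obtain ⟨Φ, hΦ⟩ := geometric_hahn_banach_open_point hf.convex_strictHypograph_interior
    hf.isOpen_strictHypograph_interior (x := (x, f x)) (fun h => lt_irrefl _ h.2)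
  set ψ := Φ.comp (ContinuousLinearMap.inl ℝ E ℝ)
  set β := Φ (0, 1)
  have hΦ_apply (p : E) (t : ℝ) : Φ (p, t) = ψ p + t * β := by
    have hpt : ((p, t) : E × ℝ) = (p, 0) + t • (0, 1) := by ext <;> simp
    rw [hpt, map_add, map_smul, smul_eq_mul]; rfl
  have hβ : 0 < β := by
    have hsep := hΦ (x, f x - 1) ⟨hx, by linarith⟩
    rw [hΦ_apply, hΦ_apply] at hsep
    linarith
  refine ⟨-β⁻¹ • ψ, fun y hy => ?_⟩
  have hle : f y * β ≤ ψ x - ψ y + f x * β := by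
    refine le_of_forall_lt fun c hc => ?_
    have hsep := hΦ (y, c / β) ⟨hy, by rwa [div_lt_iff₀ hβ]⟩
    rw [hΦ_apply, hΦ_apply, div_mul_cancel₀ _ hβ.ne'] at hsep
    linarith
  calc f y = β⁻¹ * (f y * β) := by field_simp
    _ ≤ β⁻¹ * (ψ x - ψ y + f x * β) := by gcongr
    _ = f x + (-β⁻¹ • ψ) (y - x) := by
      rw [_root_.smul_apply, map_sub, smul_eq_mul]
      field_simp
      ring

theorem ConcaveOn.le_add_of_le_add_on_interior (hf : ConcaveOn ℝ s f) (hx : x ∈ interior s)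
    {φ : E →L[ℝ] ℝ} (hφ : ∀ y ∈ interior s, f y ≤ f x + φ (y - x)) :
    ∀ y ∈ s, f y ≤ f x + φ (y - x) := by
  intro y hy
  have hmid : y + (1 / 2 : ℝ) • (x - y) ∈ interior s :=
    hf.1.add_smul_sub_mem_interior hy hx (by norm_num)
  have hconc := hf.2 hy (interior_subset hx) (by norm_num : (0 : ℝ) ≤ 1 / 2)
    (by norm_num : (0 : ℝ) ≤ 1 / 2) (by norm_num)
  have hsup := hφ _ hmid
  have hmid_eq : y + (1 / 2 : ℝ) • (x - y) = (1 / 2 : ℝ) • y + (1 / 2 : ℝ) • x := by module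
  have hdir : y + (1 / 2 : ℝ) • (x - y) - x = (1 / 2 : ℝ) • (y - x) := by module
  rw [hdir, map_smul, smul_eq_mul, hmid_eq] at hsup
  simp only [smul_eq_mul] at hconc
  linarith

theorem ConcaveOn.exists_le_add_of_mem_interior [FiniteDimensional ℝ E] (hf : ConcaveOn ℝ s f)
    (hx : x ∈ interior s) : ∃ φ : E →L[ℝ] ℝ, ∀ y ∈ s, f y ≤ f x + φ (y - x) :=
  (hf.exists_le_add_on_interior hx).imp fun _ => hf.le_add_of_le_add_on_interior hx

end Concave

theorem UpperSemicontinuousWithinAt.le_of_frequently_le {α β : Type*} [TopologicalSpace α]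
    [LinearOrder β] {f : α → β} {s : Set α} {x : α} {c : β}
    (hf : UpperSemicontinuousWithinAt f s x) (h : ∃ᶠ y in 𝓝[s] x, c ≤ f y) : c ≤ f x := by
  by_contra! hlt
  exact h ((hf c hlt).mono fun y hy => not_le.2 hy)

section Orthant

variable {N : ℕ}

theorem mem_interior_orthant {x : Fin N → ℝ} (hx : ∀ k, 0 < x k) :
    x ∈ interior {x : Fin N → ℝ | 0 ≤ x} := by
  have hopen : IsOpen {y : Fin N → ℝ | ∀ k, 0 < y k} := by
    simpa only [ofPred_forall] using
      isOpen_iInter_of_finite fun k => isOpen_lt continuous_const (continuous_apply k)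
  exact interior_maximal (fun y hy k => (hy k).le) hopen hx

theorem ConcaveOn.exists_isSupergrad {f : (Fin N → ℝ) → ℝ}
    (hf : ConcaveOn ℝ {x | 0 ≤ x} f) {x : Fin N → ℝ} (hx : ∀ k, 0 < x k) :
    ∃ g, IsSupergrad f x g := by
  obtain ⟨φ, hφ⟩ := hf.exists_le_add_of_mem_interior (mem_interior_orthant hx)
  refine ⟨fun k => φ (Pi.single k 1), fun y hy => ?_⟩
  convert hφ y hy using 2
  conv_rhs => rw [pi_eq_sum_univ' (y - x)]
  simp [map_sum, mul_comm]

/-- A negative `k`-th component would make the affine majorant, hence `f`, negative far out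
along the `k`-th axis. -/
theorem IsSupergrad.nonneg {f : (Fin N → ℝ) → ℝ} (hf : ∀ y, 0 ≤ y → 0 ≤ f y)
    {x g : Fin N → ℝ} (hx : 0 ≤ x) (hg : IsSupergrad f x g) (k : Fin N) : 0 ≤ g k := by
  by_contra! hgk
  set t := (f x + 1) / -g k
  have ht : 0 ≤ t := div_nonneg (by linarith [hf x hx]) (by linarith)
  have hy : 0 ≤ x + t • Pi.single k 1 :=
    add_nonneg hx (smul_nonneg ht (Pi.single_nonneg.2 zero_le_one))
  have hmajorant := hg _ hy
  simp only [Pi.add_apply, Pi.smul_apply, add_sub_cancel_left, smul_eq_mul, Pi.single_apply,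
    mul_ite, mul_one, mul_zero, Finset.sum_ite_eq', Finset.mem_univ, if_true] at hmajorant
  have hdrop : g k * t = -(f x + 1) := by
    rw [mul_div_assoc', div_neg, mul_div_cancel_left₀ _ hgk.ne]
  linarith [hf _ hy]

variable {f : Fin N → (Fin N → ℝ) → ℝ} {M : Matrix (Fin N) (Fin N) ℝ}

theorem IsLBM.le_of_isSupergrad (hM : IsLBM f M) {i : Fin N} (hf : ∀ y, 0 ≤ y → 0 ≤ f i y)
    {x g : Fin N → ℝ} (hx : 0 ≤ x) (hg : IsSupergrad (f i) x g) (k : Fin N) : M i k ≤ g k := by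
  rw [hM i k]
  refine csInf_le ⟨0, ?_⟩ ⟨x, hx, g, hg, rfl⟩
  rintro _ ⟨y, hy, g', hg', rfl⟩
  exact hg'.nonneg hf hy k

theorem IsLBM.nonneg_apply (hM : IsLBM f M) {i : Fin N} (hf : ∀ y, 0 ≤ y → 0 ≤ f i y)
    (k : Fin N) : 0 ≤ M i k := by
  rw [hM i k]
  refine Real.sInf_nonneg ?_
  rintro _ ⟨y, hy, g, hg, rfl⟩
  exact hg.nonneg hf hy k

theorem IsLBM.apply_zero_add_mulVec_le_of_isSupergrad (hM : IsLBM f M) {i : Fin N}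
    (hf : ∀ y, 0 ≤ y → 0 ≤ f i y) {x g : Fin N → ℝ} (hx : 0 ≤ x)
    (hg : IsSupergrad (f i) x g) : f i 0 + (M *ᵥ x) i ≤ f i x := by
  have hzero : f i 0 ≤ f i x - g ⬝ᵥ x := by
    simpa [dotProduct, sub_eq_add_neg] using hg 0 le_rfl
  have hMx : (M *ᵥ x) i ≤ g ⬝ᵥ x :=
    dotProduct_le_dotProduct_of_nonneg_right (fun k => hM.le_of_isSupergrad hf hx hg k) hx
  linarith

theorem tendsto_add_smul_one_nhdsWithin_orthant {x : Fin N → ℝ} (hx : 0 ≤ x) :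
    Tendsto (fun ε : ℝ => x + ε • 1) (𝓝[>] 0) (𝓝[{x | 0 ≤ x}] x) := by
  refine tendsto_nhdsWithin_iff.2 ⟨?_, ?_⟩
  · refine ((continuous_const.add (continuous_id.smul continuous_const)).tendsto' 0 x
      (by simp)).mono_left nhdsWithin_le_nhds
  · filter_upwards [self_mem_nhdsWithin] with ε (hε : 0 < ε)
    exact add_nonneg hx (smul_nonneg hε.le zero_le_one)

theorem IsLBM.apply_zero_add_mulVec_le (hM : IsLBM f M) {i : Fin N}
    (hconc : ConcaveOn ℝ {x : Fin N → ℝ | 0 ≤ x} (f i))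
    (husc : UpperSemicontinuousOn (f i) {x : Fin N → ℝ | 0 ≤ x})
    (hf : ∀ y, 0 ≤ y → 0 ≤ f i y) {x : Fin N → ℝ} (hx : 0 ≤ x) :
    f i 0 + (M *ᵥ x) i ≤ f i x := by
  refine UpperSemicontinuousWithinAt.le_of_frequently_le (husc x hx)
    ((tendsto_add_smul_one_nhdsWithin_orthant hx).frequently (Eventually.frequently ?_))
  filter_upwards [self_mem_nhdsWithin] with ε (hε : 0 < ε)
  have hpos : ∀ k, 0 < (x + ε • 1) k := fun k => by
    simpa using add_pos_of_nonneg_of_pos (hx k) hε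
  obtain ⟨g, hg⟩ := hconc.exists_isSupergrad hpos
  calc f i 0 + (M *ᵥ x) i ≤ f i 0 + (M *ᵥ (x + ε • 1)) i := by
        have hshift : 0 ≤ (M *ᵥ (ε • 1)) i :=
          dotProduct_nonneg_of_nonneg (hM.nonneg_apply hf) (smul_nonneg hε.le zero_le_one)
        simp only [mulVec_add, Pi.add_apply]
        linarith
    _ ≤ f i (x + ε • 1) :=
        hM.apply_zero_add_mulVec_le_of_isSupergrad hf (fun k => (hpos k).le) hg

end Orthant

theorem tendsto_pow_atTop_nhds_zero_of_spectralRadius_lt_one {A : Type*} [NormedRing A]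
    [NormedAlgebra ℂ A] [CompleteSpace A] {a : A} (ha : spectralRadius ℂ a < 1) :
    Tendsto (a ^ ·) atTop (𝓝 0) := by
  obtain ⟨r, hρr, hr1⟩ := ENNReal.lt_iff_exists_nnreal_btwn.1 ha
  have hgelfand := spectrum.pow_nnnorm_pow_one_div_tendsto_nhds_spectralRadius a
  have hbound : ∀ᶠ n : ℕ in atTop, ‖a ^ n‖ ≤ (r : ℝ) ^ n := by
    filter_upwards [hgelfand.eventually_lt_const hρr, eventually_ge_atTop 1] with n hn hn1
    rw [one_div, ENNReal.rpow_inv_lt_iff (by positivity), ENNReal.rpow_natCast] at hn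
    exact_mod_cast hn.le
  exact squeeze_zero_norm' hbound
    (tendsto_pow_atTop_nhds_zero_of_lt_one r.2 (by exact_mod_cast hr1))

theorem isUnit_one_sub_of_spectralRadius_lt_one {𝕜 A : Type*} [NormedField 𝕜] [Ring A]
    [Algebra 𝕜 A] {a : A} (ha : spectralRadius 𝕜 a < 1) : IsUnit (1 - a) := by
  have h := spectrum.mem_resolventSet_of_spectralRadius_lt (k := (1 : 𝕜)) (a := a)
    (by simpa using ha)
  rwa [spectrum.mem_resolventSet_iff, map_one] at h

theorem tendsto_geom_sum_of_tendsto_pow {R : Type*} [Ring R] [TopologicalSpace R]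
    [IsTopologicalRing R] {a b : R} (ha : Tendsto (a ^ ·) atTop (𝓝 0)) (hb : (1 - a) * b = 1) :
    Tendsto (fun n => ∑ i ∈ Finset.range n, a ^ i) atTop (𝓝 b) := by
  have hsum (n : ℕ) : ∑ i ∈ Finset.range n, a ^ i = (1 - a ^ n) * b := by
    calc ∑ i ∈ Finset.range n, a ^ i = (∑ i ∈ Finset.range n, a ^ i) * ((1 - a) * b) := by
          rw [hb, mul_one]
      _ = (1 - a ^ n) * b := by rw [← mul_assoc, geom_sum_mul_neg]
  simp_rw [hsum]
  simpa using ((tendsto_const_nhds (x := (1 : R))).sub ha).mul_const b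

namespace Matrix

variable {N : ℕ} {M : Matrix (Fin N) (Fin N) ℝ}

theorem tendsto_pow_atTop_nhds_zero_of_specRad_lt_one (hM : specRad M < 1) :
    Tendsto (M ^ ·) atTop (𝓝 0) := by
  -- any Banach algebra norm will do; the `ℓ∞`-operator norm induces the entrywise topology
  let := Matrix.linftyOpNormedRing (n := Fin N) (α := ℂ)
  let := Matrix.linftyOpNormedAlgebra (n := Fin N) (α := ℂ) (R := ℂ)
  have hC := tendsto_pow_atTop_nhds_zero_of_spectralRadius_lt_one hM
  refine tendsto_pi_nhds.2 fun i => tendsto_pi_nhds.2 fun j => ?_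
  have hre := (Complex.continuous_re.tendsto 0).comp (tendsto_pi_nhds.1 (tendsto_pi_nhds.1 hC i) j)
  have hpow (n : ℕ) : M.map (algebraMap ℝ ℂ) ^ n = (M ^ n).map (algebraMap ℝ ℂ) :=
    ((algebraMap ℝ ℂ).mapMatrix.map_pow M n).symm
  convert hre using 2 with n
  · rw [Function.comp_apply, hpow, map_apply]
    simp
  · simp

theorem isUnit_det_one_sub_of_specRad_lt_one (hM : specRad M < 1) : IsUnit (1 - M).det := by
  have hC : IsUnit (1 - M.map (algebraMap ℝ ℂ)) := isUnit_one_sub_of_spectralRadius_lt_one hM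
  rw [← (algebraMap ℝ ℂ).mapMatrix_apply, ← map_one (algebraMap ℝ ℂ).mapMatrix, ← map_sub,
    isUnit_iff_isUnit_det, ← RingHom.map_det] at hC
  exact (isUnit_map_iff _ _).1 hC

theorem tendsto_geom_sum_of_specRad_lt_one (hM : specRad M < 1) :
    Tendsto (fun n => ∑ i ∈ Finset.range n, M ^ i) atTop (𝓝 (1 - M)⁻¹) :=
  tendsto_geom_sum_of_tendsto_pow (tendsto_pow_atTop_nhds_zero_of_specRad_lt_one hM)
    (mul_nonsing_inv _ (isUnit_det_one_sub_of_specRad_lt_one hM))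

theorem pow_mulVec_nonneg {ι : Type*} [Fintype ι] [DecidableEq ι] {A : Matrix ι ι ℝ}
    (hA : ∀ i j, 0 ≤ A i j) {v : ι → ℝ} (hv : 0 ≤ v) (n : ℕ) : 0 ≤ A ^ n *ᵥ v := by
  induction n with
  | zero => simpa using hv
  | succ n ih =>
    rw [pow_succ', ← mulVec_mulVec]
    exact fun i => dotProduct_nonneg_of_nonneg (hA i) ih

theorem le_inv_one_sub_mulVec (hM0 : ∀ i j, 0 ≤ M i j) (hM : specRad M < 1) {v : Fin N → ℝ}
    (hv : 0 ≤ v) : v ≤ (1 - M)⁻¹ *ᵥ v := by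
  have hlim := ((continuous_id.matrix_mulVec (continuous_const (y := v))).tendsto _).comp
    (tendsto_geom_sum_of_specRad_lt_one hM)
  refine ge_of_tendsto hlim (eventually_atTop.2 ⟨1, fun n hn => ?_⟩)
  simp only [Function.comp_apply, id, sum_mulVec]
  calc v = M ^ 0 *ᵥ v := by simp
    _ ≤ ∑ i ∈ Finset.range n, M ^ i *ᵥ v :=
      Finset.single_le_sum (fun i _ => pow_mulVec_nonneg hM0 hv i) (Finset.mem_range.2 hn)

end Matrix

/-- The accelerated mapping takes strictly positive values on the nonnegative orthant;
in particular T(x) − Mx ≥ T(0) > 0 componentwise. -/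
theorem accelerated_mapping_positive {N : ℕ} (f : Fin N → (Fin N → ℝ) → ℝ)
    (hconc : ∀ i, ConcaveOn ℝ {x : Fin N → ℝ | 0 ≤ x} (f i))
    (husc : ∀ i, UpperSemicontinuousOn (f i) {x : Fin N → ℝ | 0 ≤ x})
    (hpos : ∀ i, ∀ x : Fin N → ℝ, 0 ≤ x → 0 < f i x)
    (M : Matrix (Fin N) (Fin N) ℝ) (hM : IsLBM f M)
    (hrad : specRad M < 1) :
    ∀ x : Fin N → ℝ, 0 ≤ x →
      (∀ i, 0 < ((1 - M)⁻¹ *ᵥ ((fun j => f j x) - M *ᵥ x)) i) ∧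
      (∀ i, f i 0 ≤ f i x - (M *ᵥ x) i) ∧
      (∀ i, 0 < f i 0) := by
  intro x hx
  have hf : ∀ i y, 0 ≤ y → 0 ≤ f i y := fun i y hy => (hpos i y hy).le
  have hkey : ∀ i, f i 0 + (M *ᵥ x) i ≤ f i x := fun i =>
    hM.apply_zero_add_mulVec_le (hconc i) (husc i) (hf i) hx
  have hv : ∀ i, 0 < ((fun j => f j x) - M *ᵥ x) i := fun i => by
    simp only [Pi.sub_apply]
    linarith [hkey i, hpos i 0 le_rfl]
  have hM0 : ∀ i k, 0 ≤ M i k := fun i => hM.nonneg_apply (hf i)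
  refine ⟨fun i => ?_, fun i => by linarith [hkey i], fun i => hpos i 0 le_rfl⟩
  exact (hv i).trans_le (le_inv_one_sub_mulVec hM0 hrad (fun j => (hv j).le) i)
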